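/- Let X, Y ∈ M_n(ℂ) with W(X) ⊂ S_α and W(Y) ⊂ S_α for α ∈ [0, π/2). Then ω(X ∘ Y) ≤ (1 + tan α) ω(X) ω(Y). In particular this improves ω(X ∘ Y) ≤ 2 ω(X) ω(Y) when 0 ≤ α < π/4. -/

import Mathlib

open Matrix Complex
open scoped ComplexOrder

/-- Hermitian real part `(X + Xᴴ)/2`. -/
noncomputable def reM {m : ℕ} (X : Matrix (Fin m) (Fin m) ℂ) : Matrix (Fin m) (Fin m) ℂ :=
  (1 / 2 : ℂ) • (X + Xᴴ)

/-- Hermitian imaginary part `(X - Xᴴ)/(2i)`. -/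
noncomputable def imM {m : ℕ} (X : Matrix (Fin m) (Fin m) ℂ) : Matrix (Fin m) (Fin m) ℂ :=
  (-Complex.I / 2) • (X - Xᴴ)

/-- Numerical range `W(X) = {⟨Xx, x⟩ : ‖x‖ = 1}`. -/
noncomputable def numRange {m : ℕ} (X : Matrix (Fin m) (Fin m) ℂ) : Set ℂ :=
  {z | ∃ x : EuclideanSpace ℂ (Fin m), ‖x‖ = 1 ∧ z = star (x : Fin m → ℂ) ⬝ᵥ X.mulVec x}

/-- Numerical radius `ω(X) = sup {|z| : z ∈ W(X)}`. -/
noncomputable def numRadius {m : ℕ} (X : Matrix (Fin m) (Fin m) ℂ) : ℝ :=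
  sSup ((fun z : ℂ => ‖z‖) '' numRange X)

/-- The sector `S_α`. -/
def sector (α : ℝ) : Set ℂ := {z : ℂ | 0 < z.re ∧ |z.im| ≤ Real.tan α * z.re}

/-- Operator norm of a matrix acting on Euclidean space. -/
noncomputable def opNorm {m : ℕ} (X : Matrix (Fin m) (Fin m) ℂ) : ℝ :=
  ‖Matrix.toEuclideanCLM (𝕜 := ℂ) X‖

/-!
Write `X = Re X + i Im X` and `t = tan α`. Sectoriality of `X` says exactly that `Re X`,
`A = t Re X + Im X` and `B = t Re X - Im X` are positive semidefinite, and
`i Im X = (i/2)(A - B)`. For positive semidefinite `H = ∑ₖ vₖ vₖᴴ` the quadratic form of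
`H ∘ Y` at `x` is `∑ₖ ⟨Y (v̄ₖ x), v̄ₖ x⟩`, hence bounded by `ω(Y) ∑ᵢ Hᵢᵢ |xᵢ|²`. Since
`A + B = 2t Re X`, the three bounds add up to
`(1 + t) ω(Y) ∑ᵢ Re Xᵢᵢ |xᵢ|² ≤ (1 + t) ω(X) ω(Y) ‖x‖²`.
-/

section NumericalRange

variable {n : ℕ} (X : Matrix (Fin n) (Fin n) ℂ)

theorem numRange_eq_image_sphere :
    numRange X = (fun x : EuclideanSpace ℂ (Fin n) => star x.ofLp ⬝ᵥ X *ᵥ x.ofLp) ''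
      Metric.sphere 0 1 := by
  ext z
  simp [numRange, eq_comm]

theorem bddAbove_norm_numRange : BddAbove ((fun z : ℂ => ‖z‖) '' numRange X) := by
  rw [numRange_eq_image_sphere, Set.image_image]
  exact (isCompact_sphere 0 1).bddAbove_image (by fun_prop)

theorem norm_le_numRadius {z : ℂ} (hz : z ∈ numRange X) : ‖z‖ ≤ numRadius X :=
  le_csSup (bddAbove_norm_numRange X) ⟨z, hz, rfl⟩

theorem numRadius_nonneg : 0 ≤ numRadius X :=
  Real.sSup_nonneg <| by rintro _ ⟨z, -, rfl⟩; exact norm_nonneg z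

theorem diag_mem_numRange (i : Fin n) : X i i ∈ numRange X :=
  ⟨EuclideanSpace.single i 1, by simp, by simp⟩

theorem dotProduct_mulVec_smul_self (c : ℂ) (x : Fin n → ℂ) :
    star (c • x) ⬝ᵥ X *ᵥ (c • x) = (‖c‖ ^ 2 : ℝ) • (star x ⬝ᵥ X *ᵥ x) := by
  rw [star_smul, mulVec_smul, smul_dotProduct, dotProduct_smul, smul_smul, Complex.real_smul,
    Complex.ofReal_pow, ← Complex.conj_mul']
  rfl

theorem exists_mem_numRange_eq_smul {x : Fin n → ℂ} (hx : x ≠ 0) :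
    ∃ z ∈ numRange X, star x ⬝ᵥ X *ᵥ x = (∑ i, ‖x i‖ ^ 2) • z := by
  set u := WithLp.toLp 2 x
  have hu : u ≠ 0 := by simpa [u] using hx
  refine ⟨_, ⟨(‖u‖⁻¹ : ℂ) • u, norm_smul_inv_norm hu, rfl⟩, ?_⟩
  rw [WithLp.ofLp_smul, dotProduct_mulVec_smul_self, smul_smul, norm_inv, Complex.norm_real,
    Real.norm_of_nonneg (norm_nonneg u), ← EuclideanSpace.norm_sq_eq, inv_pow,
    mul_inv_cancel₀ (by positivity), one_smul]

theorem norm_dotProduct_mulVec_le (x : Fin n → ℂ) :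
    ‖star x ⬝ᵥ X *ᵥ x‖ ≤ numRadius X * ∑ i, ‖x i‖ ^ 2 := by
  rcases eq_or_ne x 0 with rfl | hx
  · simp
  obtain ⟨z, hz, hq⟩ := exists_mem_numRange_eq_smul X hx
  rw [hq, norm_smul, Real.norm_of_nonneg (by positivity), mul_comm]
  exact mul_le_mul_of_nonneg_right (norm_le_numRadius X hz) (by positivity)

theorem numRadius_le_of_forall_norm_dotProduct_mulVec_le {C : ℝ} (hC : 0 ≤ C)
    (h : ∀ x : Fin n → ℂ, ‖star x ⬝ᵥ X *ᵥ x‖ ≤ C * ∑ i, ‖x i‖ ^ 2) : numRadius X ≤ C := by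
  refine Real.sSup_le ?_ hC
  rintro _ ⟨_, ⟨x, hx, rfl⟩, rfl⟩
  have hx1 : ∑ i, ‖x i‖ ^ 2 = 1 := by rw [← EuclideanSpace.norm_sq_eq, hx, one_pow]
  simpa [hx1] using h x.ofLp

end NumericalRange

section HermitianParts

variable {n : ℕ}

theorem dotProduct_conjTranspose_mulVec (X : Matrix (Fin n) (Fin n) ℂ) (x : Fin n → ℂ) :
    star x ⬝ᵥ Xᴴ *ᵥ x = star (star x ⬝ᵥ X *ᵥ x) := by
  rw [star_dotProduct, star_mulVec, conjTranspose_conjTranspose, ← dotProduct_mulVec]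

theorem dotProduct_reM_mulVec (X : Matrix (Fin n) (Fin n) ℂ) (x : Fin n → ℂ) :
    star x ⬝ᵥ reM X *ᵥ x = (star x ⬝ᵥ X *ᵥ x).re := by
  rw [reM, smul_mulVec, add_mulVec, dotProduct_smul, dotProduct_add,
    dotProduct_conjTranspose_mulVec, Complex.star_def, Complex.add_conj, smul_eq_mul]
  push_cast
  ring

theorem dotProduct_imM_mulVec (X : Matrix (Fin n) (Fin n) ℂ) (x : Fin n → ℂ) :
    star x ⬝ᵥ imM X *ᵥ x = (star x ⬝ᵥ X *ᵥ x).im := by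
  rw [imM, smul_mulVec, sub_mulVec, dotProduct_smul, dotProduct_sub,
    dotProduct_conjTranspose_mulVec, Complex.star_def, Complex.sub_conj, smul_eq_mul]
  push_cast
  linear_combination (-(star x ⬝ᵥ X *ᵥ x).im : ℂ) * Complex.I_sq

theorem reM_add_I_smul_imM (X : Matrix (Fin n) (Fin n) ℂ) :
    reM X + Complex.I • imM X = X := by
  ext i j
  simp only [reM, imM, Matrix.add_apply, Matrix.smul_apply, Matrix.sub_apply, smul_eq_mul]
  linear_combination (-(X i j - Xᴴ i j) / 2) * Complex.I_sq

theorem sum_re_reM_diag_mul_le (X : Matrix (Fin n) (Fin n) ℂ) (x : Fin n → ℂ) :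
    ∑ i, (reM X i i).re * ‖x i‖ ^ 2 ≤ numRadius X * ∑ i, ‖x i‖ ^ 2 := by
  rw [Finset.mul_sum]
  refine Finset.sum_le_sum fun i _ => mul_le_mul_of_nonneg_right ?_ (by positivity)
  have hre : (reM X i i).re = (X i i).re := by simp [reM]; ring
  exact hre ▸ (Complex.re_le_norm _).trans (norm_le_numRadius X (diag_mem_numRange X i))

-- In `ComplexOrder`, `0 ≤ z` forces `z` to be real, so `H` is automatically Hermitian.
theorem posSemidef_of_dotProduct_mulVec_nonneg {H : Matrix (Fin n) (Fin n) ℂ}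
    (h : ∀ x, 0 ≤ star x ⬝ᵥ H *ᵥ x) : H.PosSemidef := by
  rw [← isPositive_toEuclideanLin_iff, LinearMap.isPositive_iff_complex]
  intro x
  have hz := h x.ofLp
  set z := star x.ofLp ⬝ᵥ H *ᵥ x.ofLp
  have hreal : z = z.re := Complex.eq_re_of_ofReal_le (by rwa [Complex.ofReal_zero])
  have hinner : x.ofLp ⬝ᵥ star (H *ᵥ x.ofLp) = star z := by
    rw [dotProduct_comm, star_dotProduct]
  simp only [EuclideanSpace.inner_eq_star_dotProduct, toLpLin_apply, hinner]
  rw [hreal]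
  simpa using (Complex.nonneg_iff.mp hz).1

end HermitianParts

section Sectorial

variable {n : ℕ} {X : Matrix (Fin n) (Fin n) ℂ} {α : ℝ}

theorem re_nonneg_and_abs_im_le_of_numRange_subset_sector (hX : numRange X ⊆ sector α)
    (x : Fin n → ℂ) :
    0 ≤ (star x ⬝ᵥ X *ᵥ x).re ∧
      |(star x ⬝ᵥ X *ᵥ x).im| ≤ Real.tan α * (star x ⬝ᵥ X *ᵥ x).re := by
  rcases eq_or_ne x 0 with rfl | hx
  · simp
  obtain ⟨z, hz, hq⟩ := exists_mem_numRange_eq_smul X hx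
  obtain ⟨hre, him⟩ := hX hz
  have hs : 0 ≤ ∑ i, ‖x i‖ ^ 2 := by positivity
  rw [hq, Complex.smul_re, Complex.smul_im, smul_eq_mul, smul_eq_mul, abs_mul, abs_of_nonneg hs]
  exact ⟨by positivity, by nlinarith⟩

theorem posSemidef_reM_of_numRange_subset_sector (hX : numRange X ⊆ sector α) :
    (reM X).PosSemidef :=
  posSemidef_of_dotProduct_mulVec_nonneg fun x => by
    rw [dotProduct_reM_mulVec, Complex.zero_le_real]
    exact (re_nonneg_and_abs_im_le_of_numRange_subset_sector hX x).1

theorem posSemidef_tan_smul_reM_add_smul_imM (hX : numRange X ⊆ sector α) {s : ℝ}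
    (hs : |s| ≤ 1) : ((Real.tan α : ℂ) • reM X + (s : ℂ) • imM X).PosSemidef :=
  posSemidef_of_dotProduct_mulVec_nonneg fun x => by
    obtain ⟨-, him⟩ := re_nonneg_and_abs_im_le_of_numRange_subset_sector hX x
    rw [add_mulVec, smul_mulVec, smul_mulVec, dotProduct_add, dotProduct_smul, dotProduct_smul,
      dotProduct_reM_mulVec, dotProduct_imM_mulVec, smul_eq_mul, smul_eq_mul,
      ← Complex.ofReal_mul, ← Complex.ofReal_mul, ← Complex.ofReal_add, Complex.zero_le_real]
    have : |s * (star x ⬝ᵥ X *ᵥ x).im| ≤ Real.tan α * (star x ⬝ᵥ X *ᵥ x).re := by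
      rw [abs_mul]
      exact (mul_le_of_le_one_left (abs_nonneg _) hs).trans him
    linarith [neg_abs_le (s * (star x ⬝ᵥ X *ᵥ x).im)]

end Sectorial

section Hadamard

variable {n : ℕ}

theorem dotProduct_vecMulVec_hadamard_mulVec (v : Fin n → ℂ) (Y : Matrix (Fin n) (Fin n) ℂ)
    (x : Fin n → ℂ) :
    star x ⬝ᵥ (vecMulVec v (star v) ⊙ Y) *ᵥ x = star (star v * x) ⬝ᵥ Y *ᵥ (star v * x) := by
  simp only [dotProduct, mulVec, hadamard_apply, vecMulVec_apply, Pi.mul_apply, Pi.star_apply,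
    star_mul', star_star, Finset.mul_sum]
  exact Finset.sum_congr rfl fun i _ => Finset.sum_congr rfl fun j _ => by ring

theorem norm_dotProduct_hadamard_mulVec_le {H : Matrix (Fin n) (Fin n) ℂ} (hH : H.PosSemidef)
    (Y : Matrix (Fin n) (Fin n) ℂ) (x : Fin n → ℂ) :
    ‖star x ⬝ᵥ (H ⊙ Y) *ᵥ x‖ ≤ numRadius Y * ∑ i, (H i i).re * ‖x i‖ ^ 2 := by
  obtain ⟨m, v, rfl⟩ := posSemidef_iff_eq_sum_vecMulVec.mp hH
  have hsum :
      (∑ k, vecMulVec (v k) (star (v k))) ⊙ Y = ∑ k, vecMulVec (v k) (star (v k)) ⊙ Y := by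
    ext i j
    simp [Matrix.sum_apply, Finset.sum_mul]
  calc ‖star x ⬝ᵥ ((∑ k, vecMulVec (v k) (star (v k))) ⊙ Y) *ᵥ x‖
      = ‖∑ k, star (star (v k) * x) ⬝ᵥ Y *ᵥ (star (v k) * x)‖ := by
        simp only [hsum, sum_mulVec, dotProduct_sum, dotProduct_vecMulVec_hadamard_mulVec]
    _ ≤ ∑ k, numRadius Y * ∑ i, ‖(star (v k) * x) i‖ ^ 2 :=
        (norm_sum_le _ _).trans (Finset.sum_le_sum fun k _ => norm_dotProduct_mulVec_le Y _)
    _ = numRadius Y * ∑ i, ((∑ k, vecMulVec (v k) (star (v k))) i i).re * ‖x i‖ ^ 2 := by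
        simp only [← Finset.mul_sum, Matrix.sum_apply, Complex.re_sum, Finset.sum_mul]
        rw [Finset.sum_comm]
        simp [vecMulVec_apply, Complex.mul_conj, Complex.normSq_eq_norm_sq, mul_pow,
          -Complex.ofReal_pow]

end Hadamard

theorem norm_dotProduct_hadamard_mulVec_le_of_numRange_subset_sector {n : ℕ}
    {X : Matrix (Fin n) (Fin n) ℂ} {α : ℝ} (hX : numRange X ⊆ sector α) (ht : 0 ≤ Real.tan α)
    (Y : Matrix (Fin n) (Fin n) ℂ) (x : Fin n → ℂ) :
    ‖star x ⬝ᵥ (X ⊙ Y) *ᵥ x‖ ≤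
      (1 + Real.tan α) * numRadius X * numRadius Y * ∑ i, ‖x i‖ ^ 2 := by
  set t := Real.tan α
  set R := reM X
  set A := (t : ℂ) • R + ((1 : ℝ) : ℂ) • imM X
  set B := (t : ℂ) • R + ((-1 : ℝ) : ℂ) • imM X
  set w : Matrix (Fin n) (Fin n) ℂ → ℝ := fun H => ∑ i, (H i i).re * ‖x i‖ ^ 2
  set q : Matrix (Fin n) (Fin n) ℂ → ℂ := fun H => star x ⬝ᵥ H *ᵥ x
  have hq : q (X ⊙ Y) = q (R ⊙ Y) + Complex.I / 2 * (q (A ⊙ Y) - q (B ⊙ Y)) := by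
    have hdecomp : X ⊙ Y = R ⊙ Y + (Complex.I / 2) • (A ⊙ Y - B ⊙ Y) := by
      conv_lhs => rw [← reM_add_I_smul_imM X]
      ext i j
      simp [A, B, R]
      ring
    simp only [q, hdecomp, add_mulVec, smul_mulVec, sub_mulVec, dotProduct_add, dotProduct_smul,
      dotProduct_sub, smul_eq_mul]
  have hw : w A + w B = 2 * t * w R := by
    simp only [w, ← Finset.sum_add_distrib, Finset.mul_sum, ← add_mul]
    refine Finset.sum_congr rfl fun i _ => ?_
    simp [A, B]
    ring
  have hY := numRadius_nonneg Y
  calc ‖q (X ⊙ Y)‖ ≤ ‖q (R ⊙ Y)‖ + (‖q (A ⊙ Y)‖ + ‖q (B ⊙ Y)‖) / 2 := by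
        rw [hq]
        refine (norm_add_le _ _).trans (add_le_add_right ?_ _)
        rw [norm_mul, norm_div, Complex.norm_I, Complex.norm_two]
        linarith [norm_sub_le (q (A ⊙ Y)) (q (B ⊙ Y))]
    _ ≤ numRadius Y * w R + (numRadius Y * w A + numRadius Y * w B) / 2 := by
        gcongr
        · exact norm_dotProduct_hadamard_mulVec_le
            (posSemidef_reM_of_numRange_subset_sector hX) Y x
        · exact norm_dotProduct_hadamard_mulVec_le
            (posSemidef_tan_smul_reM_add_smul_imM hX (by simp)) Y x
        · exact norm_dotProduct_hadamard_mulVec_le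
            (posSemidef_tan_smul_reM_add_smul_imM hX (by simp)) Y x
    _ = (1 + t) * numRadius Y * w R := by rw [← mul_add, hw]; ring
    _ ≤ (1 + t) * numRadius Y * (numRadius X * ∑ i, ‖x i‖ ^ 2) := by
        gcongr
        exact sum_re_reM_diag_mul_le X x
    _ = _ := by ring

theorem numRadius_hadamard_le_one_add_tan_general {n : ℕ} (X Y : Matrix (Fin n) (Fin n) ℂ)
    (α : ℝ) (hα : α ∈ Set.Ico 0 (Real.pi / 2))
    (hX : numRange X ⊆ sector α) :
    numRadius (X ⊙ Y) ≤ (1 + Real.tan α) * numRadius X * numRadius Y := by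
  have ht : 0 ≤ Real.tan α := Real.tan_nonneg_of_nonneg_of_le_pi_div_two hα.1 hα.2.le
  have := numRadius_nonneg X
  have := numRadius_nonneg Y
  exact numRadius_le_of_forall_norm_dotProduct_mulVec_le _ (by positivity)
    (norm_dotProduct_hadamard_mulVec_le_of_numRange_subset_sector hX ht Y)

theorem numRadius_hadamard_le_one_add_tan {n : ℕ} (X Y : Matrix (Fin n) (Fin n) ℂ)
    (α : ℝ) (hα : α ∈ Set.Ico 0 (Real.pi / 2))
    (hX : numRange X ⊆ sector α) (hY : numRange Y ⊆ sector α) :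
    numRadius (X ⊙ Y) ≤ (1 + Real.tan α) * numRadius X * numRadius Y :=
  numRadius_hadamard_le_one_add_tan_general X Y α hα hX
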